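/- arXiv:1601.03705 — 4 statements merged into one kernel-verified Lean document; each statement's English description precedes it below -/
import Mathlib

section
/- There exist C > 0 and κ ∈ (0,1) such that for every L ≥ 1, every sequence a₁, …, a_L ∈ 𝒜, and every k₀ ∈ [1/(A+1), 1], the Euclidean distance in ℂ between (g_{a₁} ⋯ g_{a_L})·i and (g_{a₁} ⋯ g_{a_L})·k₀ is at most C·κ^L (here i is the imaginary unit in the upper half-plane and the action is by Möbius transformations). -/
noncomputable section

open Matrix

/-- The matrix `[[0,1],[1,a]]` with real entries. -/
def gmatR (a : ℕ) : Matrix (Fin 2) (Fin 2) ℝ := !![0, 1; 1, (a : ℝ)]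

/-- Möbius action of a real 2×2 matrix on ℂ. -/
def mobC (m : Matrix (Fin 2) (Fin 2) ℝ) (z : ℂ) : ℂ :=
  ((m 0 0 : ℂ) * z + (m 0 1 : ℂ)) / ((m 1 0 : ℂ) * z + (m 1 1 : ℂ))

/-- `A = max 𝒜`. -/
def maxA (𝒜 : Finset ℕ) : ℕ := 𝒜.sup id

/-!
Writing `M = g_{a₁} ⋯ g_{a_L} = [[p,q],[r,s]]`, we have
`M·z - M·w = det M · (z - w) / ((r z + s)(r w + s))` with `det M = ±1`. For `z = i` and
`w = k₀ ≥ 0` both denominators have modulus at least `s`, and since every `aⱼ ≥ 1` the bottom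
row of `M` dominates that of the Fibonacci matrix, so `s ≥ F_{L+1}` and `F_{L+1}² ≥ 2^{L-1}`.
Hence the distance is at most `2 / s² ≤ 4 · (1/2)^L`.
-/

theorem Nat.two_pow_le_two_mul_fib_succ_sq : ∀ n : ℕ, 2 ^ n ≤ 2 * Nat.fib (n + 1) ^ 2
  | 0 => by simp
  | 1 => by simp
  | n + 2 => by
    have ih := Nat.two_pow_le_two_mul_fib_succ_sq n
    have hfib : 2 * Nat.fib (n + 1) ≤ Nat.fib (n + 3) := by
      rw [Nat.fib_add_two (n := n + 1)]
      have := Nat.fib_le_fib_succ (n := n + 1)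
      omega
    calc 2 ^ (n + 2) = 4 * 2 ^ n := by ring
      _ ≤ 2 * (2 * Nat.fib (n + 1)) ^ 2 := by nlinarith
      _ ≤ 2 * Nat.fib (n + 3) ^ 2 := by gcongr

theorem mobC_sub_mobC (m : Matrix (Fin 2) (Fin 2) ℝ) {z w : ℂ}
    (hz : (m 1 0 : ℂ) * z + m 1 1 ≠ 0) (hw : (m 1 0 : ℂ) * w + m 1 1 ≠ 0) :
    mobC m z - mobC m w =
      (m.det : ℂ) * (z - w) / (((m 1 0 : ℂ) * z + m 1 1) * ((m 1 0 : ℂ) * w + m 1 1)) := by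
  rw [mobC, mobC, div_sub_div _ _ hz hw, det_fin_two]
  push_cast
  ring

theorem dist_mobC_I_ofReal_le (m : Matrix (Fin 2) (Fin 2) ℝ) (hdet : |m.det| = 1)
    (hr : 0 ≤ m 1 0) (hs : 0 < m 1 1) {k : ℝ} (hk : k ∈ Set.Icc (0 : ℝ) 1) :
    dist (mobC m Complex.I) (mobC m k) ≤ 2 / m 1 1 ^ 2 := by
  set r := m 1 0
  set s := m 1 1
  have hrk : s ≤ r * k + s := le_add_of_nonneg_left (mul_nonneg hr hk.1)
  have hnorm_I : s ≤ ‖(r : ℂ) * Complex.I + s‖ := by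
    simpa [abs_of_pos hs] using Complex.abs_re_le_norm ((r : ℂ) * Complex.I + s)
  have hnorm_k : s ≤ ‖(r : ℂ) * k + s‖ := by
    rw [← Complex.ofReal_mul, ← Complex.ofReal_add, Complex.norm_real, Real.norm_eq_abs,
      abs_of_pos (hs.trans_le hrk)]
    exact hrk
  have hnum : ‖Complex.I - k‖ ≤ 2 := by
    calc ‖Complex.I - k‖ ≤ ‖Complex.I‖ + ‖(k : ℂ)‖ := norm_sub_le _ _
      _ ≤ 2 := by
        rw [Complex.norm_I, Complex.norm_real, Real.norm_of_nonneg hk.1]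
        linarith [hk.2]
  rw [dist_eq_norm, mobC_sub_mobC m (norm_pos_iff.mp (hs.trans_le hnorm_I))
    (norm_pos_iff.mp (hs.trans_le hnorm_k)), norm_div, norm_mul, norm_mul, Complex.norm_real,
    Real.norm_eq_abs, hdet, one_mul, sq]
  exact div_le_div₀ zero_le_two hnum (by positivity)
    (mul_le_mul hnorm_I hnorm_k hs.le (hs.le.trans hnorm_I))

theorem det_gmatR (a : ℕ) : (gmatR a).det = -1 := by
  simp [gmatR, det_fin_two_of]

theorem det_prod_map_gmatR (l : List ℕ) : (l.map gmatR).prod.det = (-1) ^ l.length := by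
  induction l with
  | nil => simp
  | cons a l ih => rw [List.map_cons, List.prod_cons, det_mul, ih, det_gmatR, List.length_cons,
      pow_succ']

/-- Right multiplication by `g_a` sends the bottom row `(r, s)` to `(s, r + a s)`. -/
theorem fib_le_prod_map_gmatR (l : List ℕ) (hl : ∀ a ∈ l, 1 ≤ a) :
    (Nat.fib l.length : ℝ) ≤ (l.map gmatR).prod 1 0 ∧
      (Nat.fib (l.length + 1) : ℝ) ≤ (l.map gmatR).prod 1 1 := by
  induction l using List.reverseRecOn with
  | nil => simp
  | append_singleton l a ih =>
    obtain ⟨hr, hs⟩ := ih fun b hb => hl b (List.mem_append_left _ hb)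
    have ha : (1 : ℝ) ≤ a := by exact_mod_cast hl a (by simp)
    have hs0 : (0 : ℝ) ≤ (l.map gmatR).prod 1 1 := le_trans (Nat.cast_nonneg _) hs
    simp only [List.map_append, List.map_singleton, List.prod_append, List.prod_singleton,
      List.length_append, List.length_singleton, mul_apply, Fin.sum_univ_two, gmatR, of_apply,
      cons_val', cons_val_zero, cons_val_one, empty_val', cons_val_fin_one, Nat.fib_add_two]
    push_cast
    constructor <;> nlinarith

theorem cf_orbit_contraction_general
    (𝒜 : Finset ℕ) (hpos : ∀ a ∈ 𝒜, 0 < a) :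
    ∃ C κ : ℝ, 0 < C ∧ 0 < κ ∧ κ < 1 ∧
      ∀ l : List ℕ, l ≠ [] → (∀ a ∈ l, a ∈ 𝒜) →
        ∀ k₀ : ℝ, k₀ ∈ Set.Icc (1 / ((maxA 𝒜 : ℝ) + 1)) 1 →
          dist (mobC (l.map gmatR).prod Complex.I) (mobC (l.map gmatR).prod (k₀ : ℂ)) ≤
            C * κ ^ l.length := by
  refine ⟨4, 1 / 2, by norm_num, by norm_num, by norm_num, fun l _ hl k₀ hk₀ => ?_⟩
  set M := (l.map gmatR).prod
  obtain ⟨hr, hs⟩ := fib_le_prod_map_gmatR l fun a ha => hpos a (hl a ha)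
  have hfib : (2 : ℝ) ^ l.length ≤ 2 * (Nat.fib (l.length + 1) : ℝ) ^ 2 := by
    exact_mod_cast Nat.two_pow_le_two_mul_fib_succ_sq l.length
  have hfib_pos : (0 : ℝ) < Nat.fib (l.length + 1) := by
    exact_mod_cast Nat.fib_pos.mpr l.length.succ_pos
  have hk₀ : k₀ ∈ Set.Icc (0 : ℝ) 1 := ⟨le_trans (by positivity) hk₀.1, hk₀.2⟩
  have hdet : |M.det| = 1 := by rw [det_prod_map_gmatR, abs_pow, abs_neg, abs_one, one_pow]
  calc _ ≤ 2 / M 1 1 ^ 2 :=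
        dist_mobC_I_ofReal_le M hdet ((Nat.cast_nonneg _).trans hr) (hfib_pos.trans_le hs) hk₀
    _ ≤ 2 / (Nat.fib (l.length + 1) : ℝ) ^ 2 := by gcongr
    _ ≤ 4 * (1 / 2) ^ l.length := by
      rw [div_le_iff₀ (by positivity), div_pow, one_pow]
      field_simp
      linarith

/-- Uniform contraction: there are `C > 0` and `κ < 1` such that for any nonempty word
`g_{a₁} ⋯ g_{a_L}` in the generators and any `k₀ ∈ [1/(A+1), 1]`,
`d_E(g_{a₁}⋯g_{a_L}·i, g_{a₁}⋯g_{a_L}·k₀) ≤ C·κ^L`. -/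
theorem cf_orbit_contraction
    (𝒜 : Finset ℕ) (h2 : 2 ≤ 𝒜.card) (hpos : ∀ a ∈ 𝒜, 0 < a) :
    ∃ C κ : ℝ, 0 < C ∧ 0 < κ ∧ κ < 1 ∧
      ∀ l : List ℕ, l ≠ [] → (∀ a ∈ l, a ∈ 𝒜) →
        ∀ k₀ : ℝ, k₀ ∈ Set.Icc (1 / ((maxA 𝒜 : ℝ) + 1)) 1 →
          dist (mobC (l.map gmatR).prod Complex.I) (mobC (l.map gmatR).prod (k₀ : ℂ)) ≤
            C * κ ^ l.length :=
  cf_orbit_contraction_general 𝒜 hpos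
end
end

section
/- For every A ≥ 1 there exists c > 0 with the following property. Let E be a complex (or real) inner product space, b a real number with |b| ≥ 1, Z ⊂ ℝ a closed interval of length at most c/|b|, H : Z → ℝ a C¹ function with H > 0 and |H'(u)| ≤ A|b|·H(u) for all u ∈ Z, and f : Z → E a C¹ function with ‖f(u)‖ ≤ H(u) and ‖f'(u)‖ ≤ A|b|·H(u) for all u ∈ Z. Then either ‖f(u)‖ ≤ (3/4)·H(u) for all u ∈ Z, or ‖f(u)‖ ≥ (1/4)·H(u) for all u ∈ Z. -/
/-!
Take `c = 1/(8A)` and let `M` be the maximum of `H` on `Z`. By the mean value inequality,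
`f` and `H` both have derivative at most `A|b|M` in norm, so each oscillates by at most
`A|b|M · c/|b| = M/8` on `Z`. Hence `H ≥ 7M/8` throughout, and if `‖f(u₀)‖ > 3/4 H(u₀) ≥ 21M/32`
at one point, then `‖f‖ ≥ 21M/32 - M/8 ≥ M/4 ≥ H/4` everywhere.
-/

universe u

open Set

theorem norm_sub_le_of_norm_derivWithin_le_Icc {E : Type*} [NormedAddCommGroup E]
    [NormedSpace ℝ E] {f : ℝ → E} {a b C : ℝ} (hf : DifferentiableOn ℝ f (Icc a b))
    (hf' : ∀ x ∈ Icc a b, ‖derivWithin f (Icc a b) x‖ ≤ C) {u v : ℝ}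
    (hu : u ∈ Icc a b) (hv : v ∈ Icc a b) : ‖f u - f v‖ ≤ C * (b - a) := by
  have hC : 0 ≤ C := (norm_nonneg _).trans (hf' u hu)
  have hdist : ‖u - v‖ ≤ b - a := by
    rw [Real.norm_eq_abs, abs_sub_le_iff]
    constructor <;> linarith [hu.1, hu.2, hv.1, hv.2]
  calc ‖f u - f v‖ ≤ C * ‖u - v‖ :=
        (convex_Icc a b).norm_image_sub_le_of_norm_derivWithin_le hf hf' hv hu
    _ ≤ C * (b - a) := mul_le_mul_of_nonneg_left hdist hC

theorem small_or_large_of_oscillation_le {α : Type*} {s : Set α} {g H : α → ℝ} {M : ℝ}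
    (hH : ∀ u ∈ s, 7 / 8 * M ≤ H u ∧ H u ≤ M)
    (hg : ∀ u ∈ s, ∀ v ∈ s, |g u - g v| ≤ M / 8) :
    (∀ u ∈ s, g u ≤ 3 / 4 * H u) ∨ (∀ u ∈ s, 1 / 4 * H u ≤ g u) := by
  refine or_iff_not_imp_left.mpr fun hsmall u hu => ?_
  obtain ⟨u₀, hu₀, hlarge⟩ : ∃ u₀ ∈ s, 3 / 4 * H u₀ < g u₀ := by simpa using hsmall
  have hosc := (abs_le.mp (hg u₀ hu₀ u hu)).2
  linarith [hH u₀ hu₀, hH u hu]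

/-- The dichotomy lemma (vector-valued version of Naud's Lemma 5.11): on a short interval
`Z` of length `≤ c/|b|`, a `C¹` function `f` dominated by `H ∈ 𝒞_{A|b|}` with
`‖f'‖ ≤ A|b|H` satisfies either `‖f‖ ≤ (3/4)H` on all of `Z`, or `‖f‖ ≥ (1/4)H` on all
of `Z`.  (A complex inner product space is in particular a real one, with the same norm,
so taking `E` a real inner product space covers both cases.) -/
theorem short_interval_dichotomy (A : ℝ) (hA : 1 ≤ A) :
    ∃ c : ℝ, 0 < c ∧
      ∀ (E : Type u) [NormedAddCommGroup E] [InnerProductSpace ℝ E],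
        ∀ b : ℝ, 1 ≤ |b| →
          ∀ z₁ z₂ : ℝ, z₂ - z₁ ≤ c / |b| →
            ∀ H : ℝ → ℝ, ContDiffOn ℝ 1 H (Set.Icc z₁ z₂) →
              (∀ u ∈ Set.Icc z₁ z₂, 0 < H u) →
              (∀ u ∈ Set.Icc z₁ z₂, |derivWithin H (Set.Icc z₁ z₂) u| ≤ A * |b| * H u) →
              ∀ f : ℝ → E, ContDiffOn ℝ 1 f (Set.Icc z₁ z₂) →
                (∀ u ∈ Set.Icc z₁ z₂, ‖f u‖ ≤ H u) →
                (∀ u ∈ Set.Icc z₁ z₂, ‖derivWithin f (Set.Icc z₁ z₂) u‖ ≤ A * |b| * H u) →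
                (∀ u ∈ Set.Icc z₁ z₂, ‖f u‖ ≤ 3 / 4 * H u) ∨
                  (∀ u ∈ Set.Icc z₁ z₂, 1 / 4 * H u ≤ ‖f u‖) := by
  have hA₀ : 0 < A := one_pos.trans_le hA
  refine ⟨1 / (8 * A), by positivity, fun E _ _ b hb z₁ z₂ hlen H hH hHpos hH' f hf _ hf' => ?_⟩
  obtain hempty | hne := (Icc z₁ z₂).eq_empty_or_nonempty
  · exact Or.inl (by simp [hempty])
  obtain ⟨uM, huM, hmax⟩ := isCompact_Icc.exists_isMaxOn hne hH.continuousOn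
  have hb₀ : 0 < |b| := one_pos.trans_le hb
  have hM₀ : 0 < H uM := hHpos uM huM
  have hderiv_le : ∀ x ∈ Icc z₁ z₂, A * |b| * H x ≤ A * |b| * H uM := fun x hx =>
    mul_le_mul_of_nonneg_left (hmax hx) (by positivity)
  have hlen' : A * |b| * H uM * (z₂ - z₁) ≤ H uM / 8 :=
    calc A * |b| * H uM * (z₂ - z₁) ≤ A * |b| * H uM * (1 / (8 * A) / |b|) :=
          mul_le_mul_of_nonneg_left hlen (by positivity)
      _ = H uM / 8 := by field_simp
  have hHosc : ∀ u ∈ Icc z₁ z₂, ∀ v ∈ Icc z₁ z₂, |H u - H v| ≤ H uM / 8 := fun u hu v hv =>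
    (norm_sub_le_of_norm_derivWithin_le_Icc (hH.differentiableOn one_ne_zero)
      (fun x hx => (hH' x hx).trans (hderiv_le x hx)) hu hv).trans hlen'
  have hfosc : ∀ u ∈ Icc z₁ z₂, ∀ v ∈ Icc z₁ z₂, ‖f u - f v‖ ≤ H uM / 8 := fun u hu v hv =>
    (norm_sub_le_of_norm_derivWithin_le_Icc (hf.differentiableOn one_ne_zero)
      (fun x hx => (hf' x hx).trans (hderiv_le x hx)) hu hv).trans hlen'
  refine small_or_large_of_oscillation_le (M := H uM) (fun u hu => ⟨?_, hmax hu⟩)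
    (fun u hu v hv => (abs_norm_sub_norm_le _ _).trans (hfosc u hu v hv))
  linarith [(abs_le.mp (hHosc uM huM u hu)).2]
end

section
/- Let G be a finite group and ν : G → ℝ a nonnegative function such that ‖ν ∗ ψ‖₂ ≤ |G|^{-1/2} · ‖ν‖₁ · ‖ψ‖₂ for every ψ : G → ℂ with Σ_{g∈G} ψ(g) = 0. Then ‖ν̃ ∗ ν‖₂ ≤ 2 · ‖ν‖₁² / |G|^{1/2}, where ν̃(g) = ν(g⁻¹). -/
/-! Write `ν = ‖ν‖₁/|G| + ψ` with `ψ` of mean zero; the constant part contributes exactly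
`‖ν‖₁²/|G|^{1/2}` to `ν̃ ∗ ν`. Since `ν̃ ∗ ·` is the adjoint of `ν ∗ ·` and preserves mean zero,
`τ = ν̃ ∗ ψ` satisfies `‖τ‖₂² = ⟨ν ∗ τ, ψ⟩ ≤ |G|^{-1/2}‖ν‖₁‖τ‖₂‖ψ‖₂`, and `‖ψ‖₂ ≤ ‖ν‖₁` because
`ν ≥ 0`; this bounds the remaining part by another `‖ν‖₁²/|G|^{1/2}`. -/

universe u

noncomputable section

/-- Convolution of functions on a finite group: `(μ ∗ φ)(x) = Σ_y μ(y)·φ(y⁻¹x)`. -/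
def conv {G : Type u} [Group G] [Fintype G] (μ φ : G → ℂ) : G → ℂ :=
  fun x => ∑ y, μ y * φ (y⁻¹ * x)

/-- The `ℓ²` (Euclidean) norm on functions on a finite group. -/
def l2norm {G : Type u} [Fintype G] (φ : G → ℂ) : ℝ :=
  Real.sqrt (∑ g, ‖φ g‖ ^ 2)

open Finset ComplexConjugate

section Mean

variable {ι : Type*} [Fintype ι]

lemma sum_sub_mean_eq_zero [Nonempty ι] (f : ι → ℝ) :
    ∑ i, (f i - (∑ j, f j) / Fintype.card ι) = 0 := by
  rw [sum_sub_distrib, sum_const, card_univ, nsmul_eq_mul,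
    mul_div_cancel₀ _ (Nat.cast_ne_zero.2 Fintype.card_ne_zero), sub_self]

lemma sum_sub_mean_sq_le_sum_sq [Nonempty ι] (f : ι → ℝ) :
    ∑ i, (f i - (∑ j, f j) / Fintype.card ι) ^ 2 ≤ ∑ i, f i ^ 2 := by
  set m := (∑ j, f j) / Fintype.card ι
  have hm : 0 ≤ m * ∑ j, f j := by
    rw [div_mul_eq_mul_div, ← sq]
    positivity
  calc ∑ i, (f i - m) ^ 2 = ∑ i, f i ^ 2 - m * ∑ i, (f i - m) - m * ∑ i, f i := by
        simp only [mul_sum, ← sum_sub_distrib]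
        exact sum_congr rfl fun i _ => by ring
    _ = ∑ i, f i ^ 2 - m * ∑ i, f i := by rw [sum_sub_mean_eq_zero, mul_zero, sub_zero]
    _ ≤ ∑ i, f i ^ 2 := sub_le_self _ hm

end Mean

section L2

variable {G : Type u} [Fintype G]

lemma l2norm_eq_norm_toLp (φ : G → ℂ) :
    l2norm φ = ‖(WithLp.toLp 2 φ : EuclideanSpace ℂ G)‖ := by
  simp [l2norm, EuclideanSpace.norm_eq]

lemma l2norm_nonneg (φ : G → ℂ) : 0 ≤ l2norm φ := Real.sqrt_nonneg _

lemma l2norm_add_le (φ ψ : G → ℂ) : l2norm (φ + ψ) ≤ l2norm φ + l2norm ψ := by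
  simp only [l2norm_eq_norm_toLp, WithLp.toLp_add]
  exact norm_add_le _ _

lemma l2norm_const (c : ℂ) : l2norm (fun _ : G => c) = √(Fintype.card G) * ‖c‖ := by
  rw [l2norm, sum_const, card_univ, nsmul_eq_mul, Real.sqrt_mul (Nat.cast_nonneg _),
    Real.sqrt_sq (norm_nonneg c)]

lemma l2norm_ofReal (f : G → ℝ) : l2norm (fun g => (f g : ℂ)) = √(∑ g, f g ^ 2) := by
  simp [l2norm]

lemma l2norm_sq (φ : G → ℂ) : l2norm φ ^ 2 = ∑ g, ‖φ g‖ ^ 2 :=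
  Real.sq_sqrt (sum_nonneg fun _ _ => sq_nonneg _)

lemma sum_conj_mul_self_eq_l2norm_sq (φ : G → ℂ) :
    ∑ g, conj (φ g) * φ g = ((l2norm φ ^ 2 : ℝ) : ℂ) := by
  simp [l2norm_sq, Complex.conj_mul']

lemma norm_sum_conj_mul_le_l2norm_mul (φ ψ : G → ℂ) :
    ‖∑ g, conj (φ g) * ψ g‖ ≤ l2norm φ * l2norm ψ := by
  have := norm_inner_le_norm (𝕜 := ℂ) (WithLp.toLp 2 φ : EuclideanSpace ℂ G) (WithLp.toLp 2 ψ)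
  simpa [PiLp.inner_apply, l2norm_eq_norm_toLp, mul_comm] using this

lemma l2norm_ofReal_sub_mean_le_sum [Nonempty G] (f : G → ℝ) (hf : ∀ g, 0 ≤ f g) :
    l2norm (fun g => ((f g - (∑ h, f h) / Fintype.card G : ℝ) : ℂ)) ≤ ∑ g, f g := by
  rw [l2norm_ofReal, Real.sqrt_le_left (sum_nonneg fun g _ => hf g)]
  exact (sum_sub_mean_sq_le_sum_sq f).trans (sum_sq_le_sq_sum_of_nonneg fun g _ => hf g)

end L2

section Convolution

variable {G : Type u} [Group G] [Fintype G]

lemma sum_conv (μ φ : G → ℂ) : ∑ x, conv μ φ x = (∑ y, μ y) * ∑ x, φ x := by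
  simp only [conv]
  rw [sum_comm, sum_mul]
  refine sum_congr rfl fun y _ => ?_
  rw [← mul_sum]
  exact congrArg (μ y * ·) (Equiv.sum_comp (Equiv.mulLeft y⁻¹) φ)

lemma conv_add_right (μ φ ψ : G → ℂ) : conv μ (φ + ψ) = conv μ φ + conv μ ψ := by
  ext x
  simp [conv, mul_add, sum_add_distrib]

lemma conv_const_right (μ : G → ℂ) (c : ℂ) :
    conv μ (fun _ => c) = fun _ => (∑ y, μ y) * c := by
  ext x
  simp [conv, sum_mul]

lemma conv_star_apply (μ ψ : G → ℂ) (x : G) :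
    conv (fun g => conj (μ g⁻¹)) ψ x = ∑ y, conj (μ y) * ψ (y * x) := by
  simp only [conv]
  exact Equiv.sum_comp (Equiv.inv G) fun y => conj (μ y) * ψ (y * x)

lemma sum_conj_conv_mul (μ φ ψ : G → ℂ) :
    ∑ x, conj (conv μ φ x) * ψ x = ∑ x, conj (φ x) * conv (fun g => conj (μ g⁻¹)) ψ x := by
  simp only [conv_star_apply]
  simp only [conv, map_sum, map_mul, sum_mul, mul_sum]
  rw [sum_comm]
  conv_rhs => rw [sum_comm]
  refine sum_congr rfl fun y _ => ?_
  rw [← Equiv.sum_comp (Equiv.mulLeft y) fun x => conj (μ y) * conj (φ (y⁻¹ * x)) * ψ x]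
  simp only [Equiv.coe_mulLeft, inv_mul_cancel_left]
  exact sum_congr rfl fun x _ => by ring

theorem l2norm_conv_star_le {μ : G → ℂ} {C : ℝ}
    (hgap : ∀ τ : G → ℂ, ∑ g, τ g = 0 → l2norm (conv μ τ) ≤ C * l2norm τ)
    {ψ : G → ℂ} (hψ : ∑ g, ψ g = 0) :
    l2norm (conv (fun g => conj (μ g⁻¹)) ψ) ≤ C * l2norm ψ := by
  set τ := conv (fun g => conj (μ g⁻¹)) ψ
  have hτ : ∑ g, τ g = 0 := by rw [sum_conv, hψ, mul_zero]
  have hsq : l2norm τ ^ 2 ≤ C * l2norm τ * l2norm ψ := by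
    have h := norm_sum_conj_mul_le_l2norm_mul (conv μ τ) ψ
    rw [sum_conj_conv_mul, sum_conj_mul_self_eq_l2norm_sq, Complex.norm_real,
      Real.norm_of_nonneg (sq_nonneg _)] at h
    exact h.trans (mul_le_mul_of_nonneg_right (hgap τ hτ) (l2norm_nonneg ψ))
  -- covers `l2norm τ = 0`, since `C ≥ 0` is not assumed
  have hCψ : 0 ≤ C * l2norm ψ := (l2norm_nonneg _).trans (hgap ψ hψ)
  nlinarith [l2norm_nonneg τ]

end Convolution

/-- If a nonnegative `ν` satisfies `‖ν ∗ ψ‖₂ ≤ |G|^{-1/2}‖ν‖₁‖ψ‖₂` for all `ψ` of mean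
zero, then `‖ν̃ ∗ ν‖₂ ≤ 2‖ν‖₁²/|G|^{1/2}`, where `ν̃(g) = ν(g⁻¹)`. -/
theorem flattening_of_selfconvolution
    (G : Type u) [Group G] [Fintype G] (ν : G → ℝ) (hν : ∀ g, 0 ≤ ν g)
    (hgap : ∀ ψ : G → ℂ, (∑ g, ψ g) = 0 →
      l2norm (conv (fun g => (ν g : ℂ)) ψ) ≤
        (Real.sqrt (Fintype.card G))⁻¹ * (∑ g, ν g) * l2norm ψ) :
    l2norm (conv (fun g => (ν g⁻¹ : ℂ)) (fun g => (ν g : ℂ))) ≤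
      2 * (∑ g, ν g) ^ 2 / Real.sqrt (Fintype.card G) := by
  set S := ∑ g, ν g
  set n : ℝ := (Fintype.card G : ℝ)
  have hn : 0 < n := Nat.cast_pos.2 Fintype.card_pos
  have hS : 0 ≤ S := sum_nonneg fun g _ => hν g
  set ψ : G → ℝ := fun g => ν g - S / n
  have hsplit : (fun g => (ν g : ℂ)) = (fun _ => ((S / n : ℝ) : ℂ)) + fun g => (ψ g : ℂ) := by
    ext g
    simp [ψ]
  have hψ : ∑ g, (ψ g : ℂ) = 0 := by exact_mod_cast sum_sub_mean_eq_zero ν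
  have hconst : conv (fun g => (ν g⁻¹ : ℂ)) (fun _ => ((S / n : ℝ) : ℂ)) =
      fun _ => ((S * (S / n) : ℝ) : ℂ) := by
    have hinv : ∑ g, (ν g⁻¹ : ℂ) = S := by
      push_cast [S]
      exact Equiv.sum_comp (Equiv.inv G) fun g => (ν g : ℂ)
    rw [conv_const_right, hinv]
    push_cast
    rfl
  have hfluct : l2norm (conv (fun g => (ν g⁻¹ : ℂ)) fun g => (ψ g : ℂ)) ≤ (√n)⁻¹ * S * S := by
    have h := l2norm_conv_star_le hgap hψ
    simp only [Complex.conj_ofReal] at h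
    exact h.trans (mul_le_mul_of_nonneg_left (l2norm_ofReal_sub_mean_le_sum ν hν) (by positivity))
  calc l2norm (conv (fun g => (ν g⁻¹ : ℂ)) fun g => (ν g : ℂ))
      ≤ √n * (S * (S / n)) + (√n)⁻¹ * S * S := by
        rw [hsplit, conv_add_right, hconst]
        refine (l2norm_add_le _ _).trans (add_le_add (le_of_eq ?_) hfluct)
        rw [l2norm_const, Complex.norm_real, Real.norm_of_nonneg (by positivity)]
    _ = 2 * S ^ 2 / √n := by
        field_simp
        rw [Real.sq_sqrt hn.le]
        ring
end
end

section
/- Let 𝒜 be a finite set of positive integers and for a ∈ 𝒜 let g_a = [[0,1],[1,a]]. The semigroup generated by the g_a is free: if m, n ≥ 1 and a₁, …, a_m, b₁, …, b_n ∈ 𝒜 satisfy g_{a₁} g_{a₂} ⋯ g_{a_m} = g_{b₁} g_{b₂} ⋯ g_{b_n} as matrices, then m = n and a_i = b_i for all i. -/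
/-!
Left multiplication by `g_a` sends the rows `(r₀, r₁)` of a matrix to `(r₁, r₀ + a • r₁)`.
For a product `P` of generators with positive indices (the empty product included) the rows
satisfy `0 < r₀`, `0 ≤ r₁` and `r₁ ≰ r₀`. So in `g_a * P` the second row is the first one
times `a` plus a nonnegative remainder not dominating it, and as in division with remainder
this determines `a`. Thus the first letter of a word can be read off its product; cancelling
it and inducting recovers the whole word.
-/

def gmatZ (a : ℕ) : Matrix (Fin 2) (Fin 2) ℤ := !![0, 1; 1, (a : ℤ)]

theorem eq_of_add_nsmul_eq_add_nsmul {M : Type*} [AddCommMonoid M] [PartialOrder M]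
    [IsOrderedCancelAddMonoid M] {v x y : M} {a b : ℕ} (hv : 0 ≤ v) (hx : 0 ≤ x) (hy : 0 ≤ y)
    (hvx : ¬ v ≤ x) (hvy : ¬ v ≤ y) (h : x + a • v = y + b • v) : a = b := by
  have not_lt_of : ∀ {x y : M} {a b : ℕ}, 0 ≤ y → ¬ v ≤ x → x + a • v = y + b • v → ¬ a < b := by
    intro x y a b hy hvx h hab
    obtain ⟨k, rfl⟩ := Nat.exists_eq_add_of_lt hab
    have hx : x = y + (k + 1) • v :=
      add_right_cancel (b := a • v) (by rw [h, add_assoc y, ← add_nsmul]; congr 2; omega)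
    exact hvx <| calc
      v ≤ (k + 1) • v := le_self_nsmul hv k.succ_ne_zero
      _ ≤ y + (k + 1) • v := le_add_of_nonneg_left hy
      _ = x := hx.symm
  exact le_antisymm (not_lt.1 (not_lt_of hx hvy h.symm)) (not_lt.1 (not_lt_of hy hvx h))

theorem isUnit_gmatZ (a : ℕ) : IsUnit (gmatZ a) := by
  simp [Matrix.isUnit_iff_isUnit_det, gmatZ, Matrix.det_fin_two_of]

section Rows

variable (a : ℕ) (Q : Matrix (Fin 2) (Fin 2) ℤ)

theorem gmatZ_mul_row_zero : (gmatZ a * Q) 0 = Q 1 := by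
  ext j
  simp [gmatZ, Matrix.mul_apply, Fin.sum_univ_two]

theorem gmatZ_mul_row_one : (gmatZ a * Q) 1 = Q 0 + a • Q 1 := by
  ext j
  simp [gmatZ, Matrix.mul_apply, Fin.sum_univ_two]

end Rows

theorem prod_map_gmatZ_rows : ∀ {l : List ℕ}, (∀ a ∈ l, 0 < a) →
    0 < (l.map gmatZ).prod 0 ∧ 0 ≤ (l.map gmatZ).prod 1 ∧
      ¬ (l.map gmatZ).prod 1 ≤ (l.map gmatZ).prod 0
  | [], _ => by simp [Pi.lt_def, Pi.le_def, Fin.forall_fin_two, Fin.exists_fin_two]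
  | c :: t, hl => by
    obtain ⟨hx, hy, hyx⟩ := prod_map_gmatZ_rows fun a ha => hl a (.tail c ha)
    obtain ⟨k, rfl⟩ := Nat.exists_eq_add_of_lt (hl c List.mem_cons_self)
    rw [List.map_cons, List.prod_cons, gmatZ_mul_row_zero, gmatZ_mul_row_one]
    refine ⟨lt_of_le_of_ne hy fun h => hyx (h ▸ hx.le), add_nonneg hx.le (nsmul_nonneg hy _),
      fun h => ?_⟩
    rw [zero_add, succ_nsmul, ← add_assoc, add_le_iff_nonpos_left] at h
    exact (add_pos_of_pos_of_nonneg hx (nsmul_nonneg hy k)).not_ge h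

theorem eq_of_gmatZ_mul_prod_eq {a b : ℕ} {l₁ l₂ : List ℕ} (hl₁ : ∀ c ∈ l₁, 0 < c)
    (hl₂ : ∀ c ∈ l₂, 0 < c)
    (h : gmatZ a * (l₁.map gmatZ).prod = gmatZ b * (l₂.map gmatZ).prod) : a = b := by
  obtain ⟨hx₁, hv, hvx₁⟩ := prod_map_gmatZ_rows hl₁
  obtain ⟨hx₂, -, hvx₂⟩ := prod_map_gmatZ_rows hl₂
  have hrow₀ := congrFun h 0
  have hrow₁ := congrFun h 1
  rw [gmatZ_mul_row_zero, gmatZ_mul_row_zero] at hrow₀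
  rw [gmatZ_mul_row_one, gmatZ_mul_row_one, ← hrow₀] at hrow₁
  exact eq_of_add_nsmul_eq_add_nsmul hv hx₁.le hx₂.le hvx₁ (hrow₀ ▸ hvx₂) hrow₁

theorem one_ne_gmatZ_mul_prod {b : ℕ} {l : List ℕ} (hb : 0 < b) (hl : ∀ c ∈ l, 0 < c) :
    1 ≠ gmatZ b * (l.map gmatZ).prod := by
  intro h
  have hrow₀ := congrFun h 0
  have hrow₁ := congrFun h 1
  rw [gmatZ_mul_row_zero] at hrow₀
  rw [gmatZ_mul_row_one, ← hrow₀] at hrow₁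
  have hx : 0 ≤ (l.map gmatZ).prod 0 0 := (prod_map_gmatZ_rows hl).1.le 0
  have hx' : (l.map gmatZ).prod 0 0 + b = 0 := by simpa using (congrFun hrow₁ 0).symm
  omega

theorem prod_map_gmatZ_injective : ∀ {l₁ l₂ : List ℕ}, (∀ a ∈ l₁, 0 < a) → (∀ a ∈ l₂, 0 < a) →
    (l₁.map gmatZ).prod = (l₂.map gmatZ).prod → l₁ = l₂
  | [], [], _, _, _ => rfl
  | [], b :: t, _, hl₂, h =>
    absurd h (one_ne_gmatZ_mul_prod (hl₂ b List.mem_cons_self) fun c hc => hl₂ c (.tail b hc))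
  | a :: t, [], hl₁, _, h =>
    absurd h.symm (one_ne_gmatZ_mul_prod (hl₁ a List.mem_cons_self) fun c hc => hl₁ c (.tail a hc))
  | a :: t₁, b :: t₂, hl₁, hl₂, h => by
    have ht₁ : ∀ c ∈ t₁, 0 < c := fun c hc => hl₁ c (.tail a hc)
    have ht₂ : ∀ c ∈ t₂, 0 < c := fun c hc => hl₂ c (.tail b hc)
    simp only [List.map_cons, List.prod_cons] at h
    obtain rfl := eq_of_gmatZ_mul_prod_eq ht₁ ht₂ h
    rw [prod_map_gmatZ_injective ht₁ ht₂ ((isUnit_gmatZ a).mul_left_cancel h)]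

theorem cf_semigroup_free_general
    (𝒜 : Finset ℕ) (hpos : ∀ a ∈ 𝒜, 0 < a)
    (l₁ l₂ : List ℕ)
    (hl₁ : ∀ a ∈ l₁, a ∈ 𝒜) (hl₂ : ∀ a ∈ l₂, a ∈ 𝒜)
    (h : (l₁.map gmatZ).prod = (l₂.map gmatZ).prod) :
    l₁ = l₂ :=
  prod_map_gmatZ_injective (fun a ha => hpos a (hl₁ a ha)) (fun a ha => hpos a (hl₂ a ha)) h

/-- The semigroup generated by the matrices `g_a = [[0,1],[1,a]]`, `a ∈ 𝒜`, is free: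
two nonempty words in the generators that are equal as matrices are identical. -/
theorem cf_semigroup_free
    (𝒜 : Finset ℕ) (hpos : ∀ a ∈ 𝒜, 0 < a)
    (l₁ l₂ : List ℕ) (h₁ : l₁ ≠ []) (h₂ : l₂ ≠ [])
    (hl₁ : ∀ a ∈ l₁, a ∈ 𝒜) (hl₂ : ∀ a ∈ l₂, a ∈ 𝒜)
    (h : (l₁.map gmatZ).prod = (l₂.map gmatZ).prod) :
    l₁ = l₂ :=
  cf_semigroup_free_general 𝒜 hpos l₁ l₂ hl₁ hl₂ h
end
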